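/- arXiv:1009.2712 — 3 statements merged into one kernel-verified Lean document; each statement's English description precedes it below -/
import Mathlib

section
/- On an almost Hermitian manifold, the inclusions of curvature identity classes hold: AH_1 ⊆ AH_2 ⊆ AH_3; that is, if a (0,4) curvature-type tensor R on a real inner product space with orthogonal almost complex structure J satisfies R(X,Y,Z,U)=R(X,Y,JZ,JU) for all vectors, then it satisfies R(X,Y,Z,U)=R(X,Y,JZ,JU)+R(X,JY,Z,JU)+R(JX,Y,Z,JU), and the latter identity implies R(X,Y,Z,U)=R(JX,JY,JZ,JU). -/
/-!
Under identity 1, pair symmetry and `J² = -1` turn `R(X,JY,Z,JU)` into `-R(JX,Y,Z,JU)`, so the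
two mixed terms of identity 2 cancel.

Under identity 2, write `a = R(X,JY,Z,JU)`, `b = R(X,JY,JZ,U)`, `c = R(JX,Y,Z,JU)`,
`d = R(JX,Y,JZ,U)`. Identity 2 at `(X,Y,JZ,JU)` gives `R(X,Y,Z,U) - R(X,Y,JZ,JU) = b + d`, and,
read through pair symmetry at `(Z,U,X,Y)` and `(Z,U,Y,X)`, it gives
`R(X,Y,Z,U) - R(JX,JY,Z,U) = a + b = c + d`. Together with identity 2 itself (`= a + c`) this
forces `a = d`, and splitting `R(X,Y,Z,U) - R(JX,JY,JZ,JU)` at `R(JX,JY,Z,U)` yields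
`(a + b) - (b + d) = 0`.
-/

open scoped BigOperators InnerProductSpace

variable {V : Type*} [NormedAddCommGroup V] [InnerProductSpace ℝ V]

/-- The tensor `π₁(x,y,z,u) = g(x,u)g(y,z) − g(x,z)g(y,u)`. -/
def pi1 (x y z u : V) : ℝ := ⟪x, u⟫_ℝ * ⟪y, z⟫_ℝ - ⟪x, z⟫_ℝ * ⟪y, u⟫_ℝ

/-- The tensor `ψ(Q)` associated to a bilinear form `Q` and an almost complex
structure `J`. -/
def psi (J : V →ₗ[ℝ] V) (Q : V → V → ℝ) (x y z u : V) : ℝ :=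
  ⟪x, J u⟫_ℝ * Q y (J z) - ⟪x, J z⟫_ℝ * Q y (J u) - 2 * ⟪x, J y⟫_ℝ * Q z (J u)
    + ⟪y, J z⟫_ℝ * Q x (J u) - ⟪y, J u⟫_ℝ * Q x (J z) - 2 * ⟪z, J u⟫_ℝ * Q x (J y)

/-- `π₂ = (1/2) ψ(g)`. -/
noncomputable def pi2 (J : V →ₗ[ℝ] V) (x y z u : V) : ℝ :=
  (1 / 2) * psi J (fun a b => ⟪a, b⟫_ℝ) x y z u

/-- An algebraic curvature tensor: multilinear (linearity in the first slot,
the others follow from the symmetries), antisymmetric in the first and the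
last pairs, symmetric under exchange of the pairs, first Bianchi identity. -/
def IsACT (R : V → V → V → V → ℝ) : Prop :=
  (∀ x x' y z u, R (x + x') y z u = R x y z u + R x' y z u) ∧
  (∀ (c : ℝ) x y z u, R (c • x) y z u = c * R x y z u) ∧
  (∀ x y z u, R x y z u = -R y x z u) ∧
  (∀ x y z u, R x y z u = -R x y u z) ∧
  (∀ x y z u, R x y z u = R z u x y) ∧
  (∀ x y z u, R x y z u + R y z x u + R z x y u = 0)

/-- Identity 1: `R(X,Y,Z,U) = R(X,Y,JZ,JU)`. -/
def Id1 (J : V →ₗ[ℝ] V) (R : V → V → V → V → ℝ) : Prop :=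
  ∀ x y z u, R x y z u = R x y (J z) (J u)

/-- Identity 2: `R(X,Y,Z,U) = R(X,Y,JZ,JU) + R(X,JY,Z,JU) + R(JX,Y,Z,JU)`. -/
def Id2 (J : V →ₗ[ℝ] V) (R : V → V → V → V → ℝ) : Prop :=
  ∀ x y z u, R x y z u = R x y (J z) (J u) + R x (J y) z (J u) + R (J x) y z (J u)

/-- Identity 3: `R(X,Y,Z,U) = R(JX,JY,JZ,JU)`. -/
def Id3 (J : V →ₗ[ℝ] V) (R : V → V → V → V → ℝ) : Prop :=
  ∀ x y z u, R x y z u = R (J x) (J y) (J z) (J u)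

section

variable {R : V → V → V → V → ℝ}

namespace IsACT

variable (hR : IsACT R)
include hR

theorem antisymm_left (x y z u : V) : R x y z u = -R y x z u := hR.2.2.1 x y z u

theorem pair_symm (x y z u : V) : R x y z u = R z u x y := hR.2.2.2.2.1 x y z u

theorem neg₁ (x y z u : V) : R (-x) y z u = -R x y z u := by
  rw [← neg_one_smul ℝ x, hR.2.1, neg_one_mul]

theorem neg₂ (x y z u : V) : R x (-y) z u = -R x y z u := by
  rw [hR.antisymm_left x, hR.neg₁, neg_neg, hR.antisymm_left y]

theorem neg₃ (x y z u : V) : R x y (-z) u = -R x y z u := by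
  rw [hR.pair_symm x, hR.neg₁, hR.pair_symm z]

theorem neg₄ (x y z u : V) : R x y z (-u) = -R x y z u := by
  rw [hR.pair_symm x, hR.neg₂, hR.pair_symm z]

end IsACT

variable {J : V →ₗ[ℝ] V} (hR : IsACT R)
include hR

namespace Id2

variable (h : Id2 J R)
include h

theorem sub_J_first_pair (x y z u : V) :
    R x y z u - R (J x) (J y) z u = R x (J y) z (J u) + R x (J y) (J z) u := by
  have := h z u x y
  linarith [hR.pair_symm x y z u, hR.pair_symm (J x) (J y) z u, hR.pair_symm x (J y) z (J u),
    hR.pair_symm x (J y) (J z) u]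

theorem sub_J_first_pair' (x y z u : V) :
    R x y z u - R (J x) (J y) z u = R (J x) y z (J u) + R (J x) y (J z) u := by
  have := h.sub_J_first_pair hR y x z u
  rw [hR.antisymm_left y, hR.antisymm_left (J y), hR.antisymm_left y (J x),
    hR.antisymm_left y (J x)] at this
  linarith

end Id2

variable (hJ2 : ∀ x, J (J x) = -x)
include hJ2

theorem Id1.mixed_cancel (h : Id1 J R) (x y z u : V) :
    R x (J y) z (J u) = -R (J x) y z (J u) := by
  rw [hR.pair_symm x, h z (J u) x, hJ2, hR.neg₄, hR.pair_symm z]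

theorem Id1.id2 (h : Id1 J R) : Id2 J R := by
  intro x y z u
  rw [← h x y z u, h.mixed_cancel hR hJ2]
  ring

namespace Id2

variable (h : Id2 J R)
include h

theorem sub_J_second_pair (x y z u : V) :
    R x y z u - R x y (J z) (J u) = R x (J y) (J z) u + R (J x) y (J z) u := by
  have := h x y (J z) (J u)
  rw [hJ2, hJ2, hR.neg₃, hR.neg₄, hR.neg₄, hR.neg₄] at this
  linarith

theorem mixed_eq (x y z u : V) : R x (J y) z (J u) = R (J x) y (J z) u := by
  linarith [h x y z u, h.sub_J_second_pair hR hJ2 x y z u, h.sub_J_first_pair hR x y z u,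
    h.sub_J_first_pair' hR x y z u]

theorem id3 : Id3 J R := by
  intro x y z u
  have hJ := h.sub_J_second_pair hR hJ2 (J x) (J y) z u
  rw [hJ2, hJ2, hR.neg₁, hR.neg₂] at hJ
  linarith [h.sub_J_first_pair hR x y z u, h.mixed_eq hR hJ2 x y z u]

end Id2

end

theorem stmt0_general (J : V →ₗ[ℝ] V) (hJ2 : ∀ x, J (J x) = -x)
    (R : V → V → V → V → ℝ) (hR : IsACT R) :
    (Id1 J R → Id2 J R) ∧ (Id2 J R → Id3 J R) :=
  ⟨fun h ↦ h.id2 hR hJ2, fun h ↦ h.id3 hR hJ2⟩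

/-- For an algebraic curvature tensor `R` compatible with an
orthogonal almost complex structure `J`, identity 1 implies identity 2, and
identity 2 implies identity 3 (so `AH₁ ⊆ AH₂ ⊆ AH₃`). -/
theorem stmt0 (J : V →ₗ[ℝ] V) (hJ2 : ∀ x, J (J x) = -x)
    (hJiso : ∀ x y, ⟪J x, J y⟫_ℝ = ⟪x, y⟫_ℝ)
    (R : V → V → V → V → ℝ) (hR : IsACT R) :
    (Id1 J R → Id2 J R) ∧ (Id2 J R → Id3 J R) :=
  stmt0_general J hJ2 R hR
end

section
/- Identity 1 of AH_1 implies identity 2 of AH_2 for an algebraic curvature tensor compatible with an almost complex structure J. -/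
open scoped BigOperators InnerProductSpace

variable {V : Type*} [NormedAddCommGroup V] [InnerProductSpace ℝ V]

/-! Identity 1 and pair symmetry make `R` invariant under `J` on its first pair; since `J² = -1`
this gives `R(X,JY,Z,JU) = -R(JX,Y,Z,JU)`, so the two extra terms of identity 2 cancel and
identity 2 reduces to identity 1. -/

section

variable {R : V → V → V → V → ℝ}

theorem IsACT.swap_left (hR : IsACT R) (x y z u : V) : R x y z u = -R y x z u :=
  hR.2.2.1 x y z u

theorem IsACT.swap_pairs (hR : IsACT R) (x y z u : V) : R x y z u = R z u x y :=
  hR.2.2.2.2.1 x y z u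

theorem IsACT.neg_left (hR : IsACT R) (x y z u : V) : R (-x) y z u = -R x y z u := by
  rw [← neg_one_smul ℝ x, hR.2.1]
  ring

theorem IsACT.neg_second (hR : IsACT R) (x y z u : V) : R x (-y) z u = -R x y z u := by
  rw [hR.swap_left, hR.neg_left, ← hR.swap_left]

theorem Id1.apply_J_J_left {J : V →ₗ[ℝ] V} (hR : IsACT R) (h1 : Id1 J R) (x y z u : V) :
    R (J x) (J y) z u = R x y z u := by
  rw [hR.swap_pairs, ← h1, ← hR.swap_pairs]

theorem Id1.apply_J_second {J : V →ₗ[ℝ] V} (hJ2 : ∀ x, J (J x) = -x) (hR : IsACT R)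
    (h1 : Id1 J R) (x y z u : V) : R x (J y) z u = -R (J x) y z u := by
  rw [← h1.apply_J_J_left hR x (J y), hJ2, hR.neg_second]

end

theorem stmt1_general (J : V →ₗ[ℝ] V) (hJ2 : ∀ x, J (J x) = -x)
    (R : V → V → V → V → ℝ) (hR : IsACT R) (h1 : Id1 J R) : Id2 J R := by
  intro x y z u
  rw [h1.apply_J_second hJ2 hR, ← h1]
  ring

/-- Identity 1 implies identity 2 for an algebraic curvature
tensor compatible with an almost complex structure `J`. -/
theorem stmt1 (J : V →ₗ[ℝ] V) (hJ2 : ∀ x, J (J x) = -x)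
    (hJiso : ∀ x y, ⟪J x, J y⟫_ℝ = ⟪x, y⟫_ℝ)
    (R : V → V → V → V → ℝ) (hR : IsACT R) (h1 : Id1 J R) : Id2 J R :=
  stmt1_general J hJ2 R hR h1
end

section
/- If an algebraic curvature tensor R on a 2m-dimensional space satisfies identity 3 and has constant antiholomorphic sectional curvature ν (i.e., R(x,y,y,x)=ν for every orthonormal pair x,y with g(x,Jy)=0 and y ⟂ Jx), then R = (1/6)ψ(S) + ν π₁ − ((2m−1)/3) ν π₂, where S is the Ricci form of R. -/
/-!
Both sides are algebraic curvature tensors, and such a tensor is determined by its values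
`R(p,q,q,p)` with `‖p‖ = 1`. Writing `q = αp + βJp + w` with `w ⟂ p, Jp`,
`R(p,q,q,p) = β²R(p,Jp,Jp,p) + 2βR(p,w,Jp,p) + R(p,w,w,p)`. The last term is `ν‖w‖²`, and the
other two are read off the Ricci form `S` computed in an orthonormal basis extending
`p, Jp, w, Jw`: `S(p,p) = R(p,Jp,Jp,p) + (2m-2)ν` and `S(p,Jw) = -2R(p,w,Jp,p)`, the latter by
identity 3 and a polarization over the antiholomorphic planes spanned by `αJp + βw, αJw + βp`.
Hence `R(p,q,q,p) = ⟪p,Jq⟫S(p,Jq) + ν(‖q‖² - ⟪p,q⟫²) - (2m-1)ν⟪p,Jq⟫²`, and a direct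
computation gives the same value for the right-hand side.
-/

open scoped BigOperators InnerProductSpace

variable {V : Type*} [NormedAddCommGroup V] [InnerProductSpace ℝ V]

namespace IsACT

variable {R T : V → V → V → V → ℝ}

theorem map_add₁ (h : IsACT R) (x x' y z u : V) :
    R (x + x') y z u = R x y z u + R x' y z u := h.1 x x' y z u

theorem map_smul₁ (h : IsACT R) (c : ℝ) (x y z u : V) : R (c • x) y z u = c * R x y z u :=
  h.2.1 c x y z u

theorem antisymm₁₂ (h : IsACT R) (x y z u : V) : R x y z u = -R y x z u := h.2.2.1 x y z u

theorem antisymm₃₄ (h : IsACT R) (x y z u : V) : R x y z u = -R x y u z := h.2.2.2.1 x y z u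

theorem swap_pairs_s6 (h : IsACT R) (x y z u : V) : R x y z u = R z u x y := h.2.2.2.2.1 x y z u

theorem bianchi (h : IsACT R) (x y z u : V) : R x y z u + R y z x u + R z x y u = 0 :=
  h.2.2.2.2.2 x y z u

theorem map_add₂ (h : IsACT R) (x y y' z u : V) :
    R x (y + y') z u = R x y z u + R x y' z u := by
  rw [h.antisymm₁₂, h.map_add₁, h.antisymm₁₂ y, h.antisymm₁₂ y']; ring

theorem map_smul₂ (h : IsACT R) (c : ℝ) (x y z u : V) : R x (c • y) z u = c * R x y z u := by
  rw [h.antisymm₁₂, h.map_smul₁, h.antisymm₁₂ y]; ring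

theorem map_add₃ (h : IsACT R) (x y z z' u : V) :
    R x y (z + z') u = R x y z u + R x y z' u := by
  rw [h.swap_pairs_s6, h.map_add₁, h.swap_pairs_s6 z, h.swap_pairs_s6 z']

theorem map_smul₃ (h : IsACT R) (c : ℝ) (x y z u : V) : R x y (c • z) u = c * R x y z u := by
  rw [h.swap_pairs_s6, h.map_smul₁, h.swap_pairs_s6 z]

theorem map_add₄ (h : IsACT R) (x y z u u' : V) :
    R x y z (u + u') = R x y z u + R x y z u' := by
  rw [h.swap_pairs_s6, h.map_add₂, h.swap_pairs_s6 z, h.swap_pairs_s6 z]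

theorem map_smul₄ (h : IsACT R) (c : ℝ) (x y z u : V) : R x y z (c • u) = c * R x y z u := by
  rw [h.swap_pairs_s6, h.map_smul₂, h.swap_pairs_s6 z]

theorem map_neg₁ (h : IsACT R) (x y z u : V) : R (-x) y z u = -R x y z u := by
  simpa using h.map_smul₁ (-1) x y z u

theorem map_neg₃ (h : IsACT R) (x y z u : V) : R x y (-z) u = -R x y z u := by
  simpa using h.map_smul₃ (-1) x y z u

theorem map_neg₄ (h : IsACT R) (x y z u : V) : R x y z (-u) = -R x y z u := by
  simpa using h.map_smul₄ (-1) x y z u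

theorem map_zero₁ (h : IsACT R) (y z u : V) : R 0 y z u = 0 := by
  simpa using h.map_smul₁ 0 0 y z u

theorem map_zero₂ (h : IsACT R) (x z u : V) : R x 0 z u = 0 := by
  simpa using h.map_smul₂ 0 x 0 z u

theorem apply_self₁₂ (h : IsACT R) (x z u : V) : R x x z u = 0 := by
  linarith [h.antisymm₁₂ x x z u]

theorem apply_self₃₄ (h : IsACT R) (x y z : V) : R x y z z = 0 := by
  linarith [h.antisymm₃₄ x y z z]

theorem sectional_symm (h : IsACT R) (x y z : V) : R x y z x = R x z y x := by
  rw [h.swap_pairs_s6, h.antisymm₁₂ z, h.antisymm₃₄ x z]; ring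

theorem reverse (h : IsACT R) (x y z u : V) : R x y z u = R u z y x := by
  rw [h.swap_pairs_s6, h.antisymm₁₂, h.antisymm₃₄, neg_neg]

theorem map_sum₁ (h : IsACT R) {κ : Type*} (s : Finset κ) (f : κ → V) (y z u : V) :
    R (∑ i ∈ s, f i) y z u = ∑ i ∈ s, R (f i) y z u :=
  map_sum (AddMonoidHom.mk' (fun x => R x y z u) fun x x' => h.map_add₁ x x' y z u) f s

theorem map_sum₄ (h : IsACT R) {κ : Type*} (s : Finset κ) (f : κ → V) (x y z : V) :
    R x y z (∑ i ∈ s, f i) = ∑ i ∈ s, R x y z (f i) :=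
  map_sum (AddMonoidHom.mk' (fun u => R x y z u) fun u u' => h.map_add₄ x y z u u') f s

theorem eq_zero_of_sectional (h : IsACT R) (hs : ∀ x y, R x y y x = 0) (x y z u : V) :
    R x y z u = 0 := by
  have h₁ : ∀ x y z, R x y z x + R x z y x = 0 := fun x y z => by
    have e := hs x (y + z)
    rw [h.map_add₂, h.map_add₃, h.map_add₃, hs, hs] at e
    linarith
  have h₂ : ∀ x y z u, R x y z u + R x z y u = 0 := fun x y z u => by
    have e := h₁ (x + u) y z
    simp only [h.map_add₁, h.map_add₄] at e
    linarith [h₁ x y z, h₁ u y z, h.swap_pairs_s6 u y z x, h.antisymm₁₂ z x u y,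
      h.antisymm₃₄ x z u y, h.swap_pairs_s6 u z y x, h.antisymm₁₂ y x u z, h.antisymm₃₄ x y u z]
  linarith [h.bianchi x y z u, h₂ x y z u, h₂ y z x u, h₂ z x y u, h.antisymm₁₂ y x z u,
    h.antisymm₁₂ z y x u, h.antisymm₁₂ x z y u]

theorem add (hR : IsACT R) (hT : IsACT T) : IsACT (fun x y z u => R x y z u + T x y z u) :=
  ⟨fun x x' y z u => by dsimp only; rw [hR.map_add₁, hT.map_add₁]; ring,
   fun c x y z u => by dsimp only; rw [hR.map_smul₁, hT.map_smul₁]; ring,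
   fun x y z u => by dsimp only; rw [hR.antisymm₁₂ x, hT.antisymm₁₂ x]; ring,
   fun x y z u => by dsimp only; rw [hR.antisymm₃₄ x, hT.antisymm₃₄ x]; ring,
   fun x y z u => by dsimp only; rw [hR.swap_pairs_s6 x, hT.swap_pairs_s6 x],
   fun x y z u => by linear_combination hR.bianchi x y z u + hT.bianchi x y z u⟩

theorem const_mul (hR : IsACT R) (c : ℝ) : IsACT (fun x y z u => c * R x y z u) :=
  ⟨fun x x' y z u => by dsimp only; rw [hR.map_add₁]; ring,
   fun c' x y z u => by dsimp only; rw [hR.map_smul₁]; ring,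
   fun x y z u => by dsimp only; rw [hR.antisymm₁₂ x]; ring,
   fun x y z u => by dsimp only; rw [hR.antisymm₃₄ x]; ring,
   fun x y z u => by dsimp only; rw [hR.swap_pairs_s6 x],
   fun x y z u => by linear_combination c * hR.bianchi x y z u⟩

theorem sub (hR : IsACT R) (hT : IsACT T) : IsACT (fun x y z u => R x y z u - T x y z u) := by
  simpa only [neg_one_mul, ← sub_eq_add_neg] using hR.add (hT.const_mul (-1))

theorem eq_of_sectional (hR : IsACT R) (hT : IsACT T)
    (h : ∀ p q, ‖p‖ = 1 → R p q q p = T p q q p) (x y z u : V) : R x y z u = T x y z u := by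
  refine sub_eq_zero.1 ((hR.sub hT).eq_zero_of_sectional (fun p q => ?_) x y z u)
  show R p q q p - T p q q p = 0
  rw [← NormedSpace.norm_smul_normalize p, hR.map_smul₁, hR.map_smul₄, hT.map_smul₁,
    hT.map_smul₄]
  rcases eq_or_ne p 0 with rfl | hp
  · simp
  · rw [h _ q (NormedSpace.norm_normalize hp), sub_self]

theorem sectional_smul_add_smul_add (hR : IsACT R) (p v w : V) (α β : ℝ) :
    R p (α • p + β • v + w) (α • p + β • v + w) p
      = β ^ 2 * R p v v p + 2 * β * R p w v p + R p w w p := by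
  simp only [hR.map_add₂, hR.map_add₃, hR.map_smul₂, hR.map_smul₃, hR.apply_self₁₂, hR.apply_self₃₄,
    hR.sectional_symm p v w]
  ring

end IsACT

theorem isACT_pi1 : IsACT (pi1 : V → V → V → V → ℝ) := by
  refine ⟨fun x x' y z u => ?_, fun c x y z u => ?_, fun x y z u => ?_, fun x y z u => ?_,
    fun x y z u => ?_, fun x y z u => ?_⟩ <;> simp only [pi1, inner_add_left, real_inner_smul_left]
  · ring
  · ring
  · ring
  · ring
  · rw [real_inner_comm z y, real_inner_comm u x, real_inner_comm z x, real_inner_comm u y]; ring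
  · rw [real_inner_comm z y, real_inner_comm z x, real_inner_comm y x]; ring

theorem isACT_psi {J : V →ₗ[ℝ] V} (hJ : ∀ x y : V, ⟪y, J x⟫_ℝ = -⟪x, J y⟫_ℝ)
    {Q : V → V → ℝ} (hQ_add : ∀ a a' c, Q (a + a') c = Q a c + Q a' c)
    (hQ_smul : ∀ (t : ℝ) a c, Q (t • a) c = t * Q a c)
    (hQ : ∀ a c, Q c (J a) = -Q a (J c)) : IsACT (psi J Q) := by
  refine ⟨fun x x' y z u => ?_, fun c x y z u => ?_, fun x y z u => ?_, fun x y z u => ?_,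
    fun x y z u => ?_, fun x y z u => ?_⟩ <;> simp only [psi]
  · simp only [inner_add_left, hQ_add]; ring
  · simp only [real_inner_smul_left, hQ_smul]; ring
  · linear_combination (-2 * Q z (J u)) * hJ x y + (-2 * ⟪z, J u⟫_ℝ) * hQ x y
  · linear_combination (-2 * ⟪x, J y⟫_ℝ) * hQ u z + (-2 * Q x (J y)) * hJ u z
  · linear_combination (-Q z (J y)) * hJ x u + ⟪x, J u⟫_ℝ * hQ y z
      + Q u (J y) * hJ x z + (-⟪x, J z⟫_ℝ) * hQ y u
      + (-Q u (J x)) * hJ y z + ⟪y, J z⟫_ℝ * hQ x u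
      + Q z (J x) * hJ y u + (-⟪y, J u⟫_ℝ) * hQ x z
  · linear_combination (-⟪y, J u⟫_ℝ) * hQ z x + (-⟪z, J u⟫_ℝ) * hQ x y
      + (-⟪x, J u⟫_ℝ) * hQ y z + (-Q y (J u)) * hJ z x
      + (-Q z (J u)) * hJ x y + (-Q x (J u)) * hJ y z

theorem psi_sectional {J : V →ₗ[ℝ] V} (hJ : ∀ x y : V, ⟪y, J x⟫_ℝ = -⟪x, J y⟫_ℝ)
    {Q : V → V → ℝ} (hQ : ∀ a c, Q c (J a) = -Q a (J c)) (p q : V) :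
    psi J Q p q q p = 6 * ⟪p, J q⟫_ℝ * Q p (J q) := by
  have hself : ∀ a : V, ⟪a, J a⟫_ℝ = 0 := fun a => by linarith [hJ a a]
  simp only [psi, hself, hJ p q, hQ p q]
  ring

theorem isACT_pi2 {J : V →ₗ[ℝ] V} (hJ : ∀ x y : V, ⟪y, J x⟫_ℝ = -⟪x, J y⟫_ℝ) :
    IsACT (pi2 J : V → V → V → V → ℝ) :=
  (isACT_psi hJ inner_add_left (fun t a c => real_inner_smul_left a c t)
    hJ).const_mul (1 / 2)

theorem pi2_sectional {J : V →ₗ[ℝ] V} (hJ : ∀ x y : V, ⟪y, J x⟫_ℝ = -⟪x, J y⟫_ℝ) (p q : V) :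
    pi2 J p q q p = 3 * ⟪p, J q⟫_ℝ ^ 2 := by
  rw [pi2, psi_sectional hJ hJ]
  ring

structure IsOrthogonalComplexStructure (J : V →ₗ[ℝ] V) : Prop where
  apply_apply : ∀ x, J (J x) = -x
  inner_apply_apply : ∀ x y, ⟪J x, J y⟫_ℝ = ⟪x, y⟫_ℝ

namespace IsOrthogonalComplexStructure

variable {J : V →ₗ[ℝ] V}

theorem inner_apply_swap (hJ : IsOrthogonalComplexStructure J) (x y : V) :
    ⟪y, J x⟫_ℝ = -⟪x, J y⟫_ℝ := by
  rw [← hJ.inner_apply_apply y, hJ.apply_apply, inner_neg_right, real_inner_comm]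

theorem inner_self_apply (hJ : IsOrthogonalComplexStructure J) (x : V) : ⟪x, J x⟫_ℝ = 0 := by
  linarith [hJ.inner_apply_swap x x]

theorem inner_apply_left (hJ : IsOrthogonalComplexStructure J) (x y : V) :
    ⟪J x, y⟫_ℝ = -⟪x, J y⟫_ℝ := by
  rw [real_inner_comm, hJ.inner_apply_swap]

noncomputable def toLinearIsometryEquiv (hJ : IsOrthogonalComplexStructure J) :
    V ≃ₗᵢ[ℝ] V where
  toLinearEquiv := LinearEquiv.ofLinearMap J (-J) (by ext x; simp [hJ.apply_apply])
    (by ext x; simp [hJ.apply_apply])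
  norm_map' x := by
    simp only [LinearEquiv.coe_ofLinearMap, norm_eq_sqrt_real_inner, hJ.inner_apply_apply]

theorem norm_apply (hJ : IsOrthogonalComplexStructure J) (x : V) : ‖J x‖ = ‖x‖ :=
  hJ.toLinearIsometryEquiv.norm_map x

theorem orthonormal_pair (hJ : IsOrthogonalComplexStructure J) {p : V} (hp : ‖p‖ = 1) :
    Orthonormal ℝ ![p, J p] := by
  rw [orthonormal_iff_ite]
  intro i j
  fin_cases i <;> fin_cases j <;>
    simp [hp, hJ.norm_apply, hJ.inner_apply_left, hJ.inner_self_apply]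

theorem orthonormal_quadruple (hJ : IsOrthogonalComplexStructure J) {p w : V} (hp : ‖p‖ = 1)
    (hw : ‖w‖ = 1) (hpw : ⟪p, w⟫_ℝ = 0) (hpJw : ⟪p, J w⟫_ℝ = 0) :
    Orthonormal ℝ ![p, J p, w, J w] := by
  have hwJp : ⟪w, J p⟫_ℝ = 0 := by rw [hJ.inner_apply_swap, hpJw, neg_zero]
  rw [orthonormal_iff_ite]
  intro i j
  fin_cases i <;> fin_cases j <;>
    simp [hp, hw, hpw, hpJw, hwJp, hJ.norm_apply, hJ.apply_apply, hJ.inner_apply_left,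
      hJ.inner_self_apply, real_inner_comm p w]

theorem exists_decomposition (hJ : IsOrthogonalComplexStructure J) {p : V} (hp : ‖p‖ = 1)
    (q : V) : ∃ (α β : ℝ) (w : V), q = α • p + β • J p + w ∧ ⟪p, w⟫_ℝ = 0 ∧ ⟪p, J w⟫_ℝ = 0 := by
  refine ⟨⟪p, q⟫_ℝ, ⟪J p, q⟫_ℝ, q - ⟪p, q⟫_ℝ • p - ⟪J p, q⟫_ℝ • J p, by abel, ?_, ?_⟩ <;>
    simp [inner_add_right, inner_sub_right, real_inner_smul_right, hp, hJ.apply_apply,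
      hJ.inner_apply_left, hJ.inner_self_apply]

end IsOrthogonalComplexStructure

noncomputable def ricci {ι : Type*} [Fintype ι] (b : OrthonormalBasis ι ℝ V)
    (R : V → V → V → V → ℝ) (y z : V) : ℝ :=
  ∑ i, R (b i) y z (b i)

namespace IsACT

variable {R : V → V → V → V → ℝ} {ι : Type*} [Fintype ι]

theorem ricci_eq_ricci (hR : IsACT R) (b : OrthonormalBasis ι ℝ V) {ι' : Type*} [Fintype ι']
    (b' : OrthonormalBasis ι' ℝ V) (y z : V) : ricci b R y z = ricci b' R y z := by
  calc ricci b R y z = ∑ i, ∑ j, R (b' j) y z (⟪b i, b' j⟫_ℝ • b i) := by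
        refine Finset.sum_congr rfl fun i _ => ?_
        conv_lhs => arg 1; rw [← b'.sum_repr' (b i)]
        rw [hR.map_sum₁]
        refine Finset.sum_congr rfl fun j _ => ?_
        rw [hR.map_smul₁, hR.map_smul₄, real_inner_comm]
    _ = ricci b' R y z := by
        rw [Finset.sum_comm]
        refine Finset.sum_congr rfl fun j _ => ?_
        rw [← hR.map_sum₄, b.sum_repr']

theorem ricci_eq_sum_add_mul (hR : IsACT R) (b : OrthonormalBasis ι ℝ V) {κ : Type*}
    [Fintype κ] {v : κ → V} (hv : Orthonormal ℝ v) {y z : V} {c : ℝ}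
    (hc : ∀ e, ‖e‖ = 1 → (∀ j, ⟪e, v j⟫_ℝ = 0) → R e y z e = c) :
    ricci b R y z = ∑ j, R (v j) y z (v j) + (Fintype.card ι - Fintype.card κ) * c := by
  classical
  have : FiniteDimensional ℝ V := Module.Finite.of_basis b.toBasis
  have hinj := hv.linearIndependent.injective
  obtain ⟨u, b', hvu, hb'⟩ :=
    ((orthonormal_subtype_range hinj).2 hv).exists_orthonormalBasis_extension
  have hu : Orthonormal ℝ ((↑) : u → V) := hb' ▸ b'.orthonormal
  have hcard : u.card = Fintype.card ι := by
    simpa using (Module.finrank_eq_card_basis b'.toBasis).symm.trans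
      (Module.finrank_eq_card_basis b.toBasis)
  have htu : Finset.univ.image v ⊆ u := by
    rintro _ hx
    obtain ⟨j, -, rfl⟩ := Finset.mem_image.1 hx
    exact hvu ⟨j, rfl⟩
  have hrest : ∀ e ∈ u \ Finset.univ.image v, R e y z e = c := by
    intro e he
    obtain ⟨heu, hev⟩ := Finset.mem_sdiff.1 he
    refine hc e (hu.1 ⟨e, heu⟩) fun j => hu.2 (i := ⟨e, heu⟩) (j := ⟨v j, htu ?_⟩) ?_
    · exact Finset.mem_image_of_mem v (Finset.mem_univ j)
    · intro h
      cases congrArg Subtype.val h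
      exact hev (Finset.mem_image_of_mem v (Finset.mem_univ j))
  have hcard_image : (Finset.univ.image v).card = Fintype.card κ := by
    rw [Finset.card_image_of_injective _ hinj, Finset.card_univ]
  rw [hR.ricci_eq_ricci b b', ricci, hb', Finset.sum_coe_sort u (fun e => R e y z e),
    ← Finset.sum_sdiff htu, Finset.sum_image fun _ _ _ _ h => hinj h, Finset.sum_congr rfl hrest,
    Finset.sum_const, nsmul_eq_mul, Finset.card_sdiff_of_subset htu, hcard,
    hcard_image, Nat.cast_sub (hcard ▸ hcard_image ▸ Finset.card_le_card htu)]
  ring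

theorem ricci_comm (hR : IsACT R) (b : OrthonormalBasis ι ℝ V) (y z : V) :
    ricci b R y z = ricci b R z y :=
  Finset.sum_congr rfl fun i _ => hR.sectional_symm (b i) y z

theorem ricci_add_right (hR : IsACT R) (b : OrthonormalBasis ι ℝ V) (y z z' : V) :
    ricci b R y (z + z') = ricci b R y z + ricci b R y z' := by
  simp only [ricci, hR.map_add₃, Finset.sum_add_distrib]

theorem ricci_smul_right (hR : IsACT R) (b : OrthonormalBasis ι ℝ V) (t : ℝ) (y z : V) :
    ricci b R y (t • z) = t * ricci b R y z := by
  simp only [ricci, hR.map_smul₃, Finset.mul_sum]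

theorem ricci_neg_right (hR : IsACT R) (b : OrthonormalBasis ι ℝ V) (y z : V) :
    ricci b R y (-z) = -ricci b R y z := by
  simpa using hR.ricci_smul_right b (-1) y z

theorem ricci_add_left (hR : IsACT R) (b : OrthonormalBasis ι ℝ V) (y y' z : V) :
    ricci b R (y + y') z = ricci b R y z + ricci b R y' z := by
  simp only [hR.ricci_comm b _ z, hR.ricci_add_right]

theorem ricci_smul_left (hR : IsACT R) (b : OrthonormalBasis ι ℝ V) (t : ℝ) (y z : V) :
    ricci b R (t • y) z = t * ricci b R y z := by
  simp only [hR.ricci_comm b _ z, hR.ricci_smul_right]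

theorem ricci_apply_apply {J : V →ₗ[ℝ] V} (hR : IsACT R) (h3 : Id3 J R)
    (hJ : IsOrthogonalComplexStructure J) (b : OrthonormalBasis ι ℝ V) (y z : V) :
    ricci b R (J y) (J z) = ricci b R y z := by
  rw [hR.ricci_eq_ricci b (b.map hJ.toLinearIsometryEquiv)]
  exact Finset.sum_congr rfl fun i _ => (h3 (b i) y z (b i)).symm

theorem ricci_apply_swap {J : V →ₗ[ℝ] V} (hR : IsACT R) (h3 : Id3 J R)
    (hJ : IsOrthogonalComplexStructure J) (b : OrthonormalBasis ι ℝ V) (y z : V) :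
    ricci b R z (J y) = -ricci b R y (J z) := by
  rw [← hR.ricci_apply_apply h3 hJ b z (J y), hJ.apply_apply, hR.ricci_neg_right,
    hR.ricci_comm b (J z)]

end IsACT

def HasConstAntiholomorphicCurvature (J : V →ₗ[ℝ] V) (R : V → V → V → V → ℝ) (ν : ℝ) :
    Prop :=
  ∀ x y : V, ‖x‖ = 1 → ‖y‖ = 1 → ⟪x, y⟫_ℝ = 0 → ⟪x, J y⟫_ℝ = 0 → R x y y x = ν

namespace HasConstAntiholomorphicCurvature

variable {J : V →ₗ[ℝ] V} {R : V → V → V → V → ℝ} {ν : ℝ} {ι : Type*} [Fintype ι]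

theorem apply_eq (hν : HasConstAntiholomorphicCurvature J R ν) (hR : IsACT R) {a y : V}
    (hay : ⟪a, y⟫_ℝ = 0) (haJy : ⟪a, J y⟫_ℝ = 0) : R a y y a = ν * ⟪a, a⟫_ℝ * ⟪y, y⟫_ℝ := by
  rcases eq_or_ne a 0 with rfl | ha
  · simp [hR.map_zero₁]
  rcases eq_or_ne y 0 with rfl | hy
  · simp [hR.map_zero₂]
  have hunit := hν (NormedSpace.normalize a) (NormedSpace.normalize y)
    (NormedSpace.norm_normalize ha) (NormedSpace.norm_normalize hy)
    (by simp [NormedSpace.normalize, real_inner_smul_left, real_inner_smul_right, hay])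
    (by simp [NormedSpace.normalize, real_inner_smul_left, real_inner_smul_right, haJy])
  conv_lhs => rw [← NormedSpace.norm_smul_normalize a, ← NormedSpace.norm_smul_normalize y]
  rw [hR.map_smul₁, hR.map_smul₂, hR.map_smul₃, hR.map_smul₄, hunit,
    real_inner_self_eq_norm_sq, real_inner_self_eq_norm_sq]
  ring

theorem apply_add_apply (hν : HasConstAntiholomorphicCurvature J R ν) (hR : IsACT R)
    {e p q : V} (hep : ⟪e, p⟫_ℝ = 0) (heJp : ⟪e, J p⟫_ℝ = 0) (heq : ⟪e, q⟫_ℝ = 0)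
    (heJq : ⟪e, J q⟫_ℝ = 0) : R e p q e = ν * ⟪e, e⟫_ℝ * ⟪p, q⟫_ℝ := by
  have h := hν.apply_eq hR (a := e) (y := p + q) (by rw [inner_add_right, hep, heq, add_zero])
    (by rw [map_add, inner_add_right, heJp, heJq, add_zero])
  rw [hR.map_add₂, hR.map_add₃, hR.map_add₃, hν.apply_eq hR hep heJp, hν.apply_eq hR heq heJq,
    hR.sectional_symm e q p, inner_add_left, inner_add_right, inner_add_right,
    real_inner_comm p q] at h
  linarith

theorem apply_cross (hν : HasConstAntiholomorphicCurvature J R ν) (hR : IsACT R)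
    (hJ : IsOrthogonalComplexStructure J) {p w : V} (hp : ‖p‖ = 1) (hw : ‖w‖ = 1)
    (hpw : ⟪p, w⟫_ℝ = 0) (hpJw : ⟪p, J w⟫_ℝ = 0) : R w p (J w) w = -R p w (J p) p := by
  have hpp : ⟪p, p⟫_ℝ = 1 := by simp [hp]
  have hww : ⟪w, w⟫_ℝ = 1 := by simp [hw]
  have hwJp : ⟪w, J p⟫_ℝ = 0 := by rw [hJ.inner_apply_swap, hpJw, neg_zero]
  -- The planes spanned by `αJp + βw, αJw + βp` are antiholomorphic, so the `αβ³`-coefficient of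
  -- `R` on them vanishes; four values of `(α, β)` isolate it.
  have hquartic : ∀ α β : ℝ, R (α • J p + β • w) (α • J w + β • p) (α • J w + β • p)
      (α • J p + β • w) = ν * (α ^ 2 + β ^ 2) * (α ^ 2 + β ^ 2) := by
    intro α β
    rw [hν.apply_eq hR] <;>
      simp only [inner_add_left, inner_add_right, real_inner_smul_left, real_inner_smul_right,
        map_add, map_smul, hJ.apply_apply, smul_neg, inner_neg_right, hJ.inner_apply_left,
        hJ.inner_self_apply, hpp, hww, hpw, hpJw, hwJp, real_inner_comm p w] <;> ring
  have e₁ := hquartic 1 1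
  have e₂ := hquartic 1 (-1)
  have e₃ := hquartic 2 1
  have e₄ := hquartic 2 (-1)
  simp only [hR.map_add₁, hR.map_add₂, hR.map_add₃, hR.map_add₄, hR.map_smul₁, hR.map_smul₂,
    hR.map_smul₃, hR.map_smul₄] at e₁ e₂ e₃ e₄
  linarith [hR.reverse w p p (J p), hR.sectional_symm w p (J w), hR.swap_pairs_s6 (J p) p p w]

theorem ricci_self (hν : HasConstAntiholomorphicCurvature J R ν) (hR : IsACT R)
    (hJ : IsOrthogonalComplexStructure J) (b : OrthonormalBasis ι ℝ V) {p : V} (hp : ‖p‖ = 1) :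
    ricci b R p p = R p (J p) (J p) p + (Fintype.card ι - 2) * ν := by
  rw [hR.ricci_eq_sum_add_mul b (hJ.orthonormal_pair hp) (c := ν)
    fun e he hperp => hν e p he hp (hperp 0) (hperp 1)]
  simp [hR.apply_self₁₂, hR.swap_pairs_s6 (J p) p p (J p)]

theorem ricci_apply_of_orthonormal (hν : HasConstAntiholomorphicCurvature J R ν)
    (hR : IsACT R) (h3 : Id3 J R) (hJ : IsOrthogonalComplexStructure J)
    (b : OrthonormalBasis ι ℝ V) {p w : V} (hp : ‖p‖ = 1) (hw : ‖w‖ = 1) (hpw : ⟪p, w⟫_ℝ = 0)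
    (hpJw : ⟪p, J w⟫_ℝ = 0) : ricci b R p (J w) = -2 * R p w (J p) p := by
  have hrest : ∀ e, ‖e‖ = 1 → (∀ j, ⟪e, ![p, J p, w, J w] j⟫_ℝ = 0) → R e p (J w) e = 0 :=
    fun e _ hperp => by
      rw [hν.apply_add_apply hR (p := p) (q := J w) (hperp 0) (hperp 1) (hperp 3)
        (by rw [hJ.apply_apply, inner_neg_right, neg_eq_zero]; exact hperp 2), hpJw, mul_zero]
  have hJp : R (J p) p (J w) (J p) = -R p w (J p) p := by
    rw [h3, hJ.apply_apply, hJ.apply_apply, hR.map_neg₁, hR.map_neg₃, hR.map_neg₄,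
      hR.sectional_symm]
    ring
  rw [hR.ricci_eq_sum_add_mul b (hJ.orthonormal_quadruple hp hw hpw hpJw) hrest]
  simp only [Fin.sum_univ_four, Matrix.cons_val_zero, Matrix.cons_val_one, Matrix.cons_val_two,
    Matrix.cons_val_three, Matrix.head_cons, Matrix.tail_cons, hR.apply_self₁₂, hR.apply_self₃₄,
    hJp, hν.apply_cross hR hJ hp hw hpw hpJw]
  ring

theorem ricci_apply_of_orthogonal (hν : HasConstAntiholomorphicCurvature J R ν) (hR : IsACT R)
    (h3 : Id3 J R) (hJ : IsOrthogonalComplexStructure J) (b : OrthonormalBasis ι ℝ V)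
    {p w : V} (hp : ‖p‖ = 1) (hpw : ⟪p, w⟫_ℝ = 0) (hpJw : ⟪p, J w⟫_ℝ = 0) :
    ricci b R p (J w) = -2 * R p w (J p) p := by
  rw [← NormedSpace.norm_smul_normalize w, map_smul, hR.ricci_smul_right, hR.map_smul₂]
  rcases eq_or_ne w 0 with rfl | hw
  · simp
  rw [hν.ricci_apply_of_orthonormal hR h3 hJ b hp (NormedSpace.norm_normalize hw)]
  · ring
  all_goals simp [NormedSpace.normalize, real_inner_smul_right, hpw, hpJw]

theorem sectional_eq (hν : HasConstAntiholomorphicCurvature J R ν) (hR : IsACT R)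
    (h3 : Id3 J R) (hJ : IsOrthogonalComplexStructure J) (b : OrthonormalBasis ι ℝ V)
    {p : V} (hp : ‖p‖ = 1) (q : V) :
    R p q q p = ⟪p, J q⟫_ℝ * ricci b R p (J q) + ν * (⟪q, q⟫_ℝ - ⟪p, q⟫_ℝ ^ 2)
      - (Fintype.card ι - 1) * ν * ⟪p, J q⟫_ℝ ^ 2 := by
  obtain ⟨α, β, w, rfl, hpw, hpJw⟩ := hJ.exists_decomposition hp q
  have hpp : ⟪p, p⟫_ℝ = 1 := by simp [hp]
  have hwJp : ⟪w, J p⟫_ℝ = 0 := by rw [hJ.inner_apply_swap, hpJw, neg_zero]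
  have hpJq : ⟪p, J (α • p + β • J p + w)⟫_ℝ = -β := by
    simp [inner_add_right, real_inner_smul_right, hJ.apply_apply, hJ.inner_self_apply, hpJw, hp]
  have hqq : ⟪α • p + β • J p + w, α • p + β • J p + w⟫_ℝ - ⟪p, α • p + β • J p + w⟫_ℝ ^ 2
      = β ^ 2 + ⟪w, w⟫_ℝ := by
    simp only [inner_add_left, inner_add_right, real_inner_smul_left, real_inner_smul_right,
      hJ.inner_apply_left, hJ.apply_apply, inner_neg_right, hJ.inner_self_apply, hpp, hpw, hpJw,
      hwJp, real_inner_comm p w]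
    ring
  have hpJp : ricci b R p (J p) = 0 := by
    linarith [hR.ricci_apply_swap h3 hJ b p p]
  rw [hR.sectional_smul_add_smul_add, hν.apply_eq hR hpw hpJw, hpJq, hqq, map_add, map_add,
    map_smul, map_smul, hJ.apply_apply, hR.ricci_add_right, hR.ricci_add_right,
    hR.ricci_smul_right, hR.ricci_smul_right, hR.ricci_neg_right, hpJp,
    hν.ricci_self hR hJ b hp, hν.ricci_apply_of_orthogonal hR h3 hJ b hp hpw hpJw, hpp]
  ring

end HasConstAntiholomorphicCurvature

theorem stmt6_general (m : ℕ) (b : OrthonormalBasis (Fin (2 * m)) ℝ V)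
    (J : V →ₗ[ℝ] V) (hJ2 : ∀ x, J (J x) = -x)
    (hJiso : ∀ x y, ⟪J x, J y⟫_ℝ = ⟪x, y⟫_ℝ)
    (R : V → V → V → V → ℝ) (hR : IsACT R) (h3 : Id3 J R) (ν : ℝ)
    (hν : ∀ x y : V, ‖x‖ = 1 → ‖y‖ = 1 → ⟪x, y⟫_ℝ = 0 → ⟪x, J y⟫_ℝ = 0 →
      R x y y x = ν) :
    ∀ x y z u : V,
      R x y z u =
        (1 / 6) * psi J (fun a c => ∑ i, R (b i) a c (b i)) x y z u
          + ν * pi1 x y z u - ((2 * (m : ℝ) - 1) / 3) * ν * pi2 J x y z u := by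
  have hJ : IsOrthogonalComplexStructure J := ⟨hJ2, hJiso⟩
  have hRicci := hR.ricci_apply_swap h3 hJ b
  have hT : IsACT fun x y z u => (1 / 6) * psi J (ricci b R) x y z u + ν * pi1 x y z u
      - ((2 * (m : ℝ) - 1) / 3) * ν * pi2 J x y z u :=
    (((isACT_psi hJ.inner_apply_swap (hR.ricci_add_left b) (hR.ricci_smul_left b)
      hRicci).const_mul _).add (isACT_pi1.const_mul ν)).sub
      ((isACT_pi2 hJ.inner_apply_swap).const_mul _)
  refine hR.eq_of_sectional hT fun p q hp => ?_
  rw [HasConstAntiholomorphicCurvature.sectional_eq hν hR h3 hJ b hp q,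
    psi_sectional (Q := fun a c => ∑ i, R (b i) a c (b i)) hJ.inner_apply_swap hRicci,
    pi2_sectional hJ.inner_apply_swap, pi1, real_inner_self_eq_norm_sq p, hp, Fintype.card_fin,
    real_inner_comm q p, ricci]
  push_cast
  ring

/-- If an algebraic curvature tensor `R` on a `2m`-dimensional
space (`m ≥ 3`) satisfies identity 3 and has constant antiholomorphic
sectional curvature `ν`, then `R = (1/6)ψ(S) + ν π₁ − ((2m−1)/3) ν π₂`, where
`S` is the Ricci form of `R`. -/
theorem stmt6 (m : ℕ) (hm : 3 ≤ m) (b : OrthonormalBasis (Fin (2 * m)) ℝ V)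
    (J : V →ₗ[ℝ] V) (hJ2 : ∀ x, J (J x) = -x)
    (hJiso : ∀ x y, ⟪J x, J y⟫_ℝ = ⟪x, y⟫_ℝ)
    (R : V → V → V → V → ℝ) (hR : IsACT R) (h3 : Id3 J R) (ν : ℝ)
    (hν : ∀ x y : V, ‖x‖ = 1 → ‖y‖ = 1 → ⟪x, y⟫_ℝ = 0 → ⟪x, J y⟫_ℝ = 0 →
      R x y y x = ν) :
    ∀ x y z u : V,
      R x y z u =
        (1 / 6) * psi J (fun a c => ∑ i, R (b i) a c (b i)) x y z u
          + ν * pi1 x y z u - ((2 * (m : ℝ) - 1) / 3) * ν * pi2 J x y z u :=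
  stmt6_general m b J hJ2 hJiso R hR h3 ν hν
end
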